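/- Let f be a measurable real-valued function on a probability space (Ω, A, P) such that P(|f| > z) ≤ c/z² for all z > 0, for some constant c > 0, and let β⁻¹ : (0,1) → [0,∞) be a nonincreasing function satisfying β⁻¹(u) ≤ u^b for all u ∈ (0,1) and some b > 0. Then ‖f‖²_{2,β} := ∫₀¹ β⁻¹(u) Q_f²(u) du ≤ c/b. -/

import Mathlib

open MeasureTheory Filter
open scoped ENNReal NNReal Topology BigOperators

noncomputable section

/-- The cadlag inverse of the tail function `z ↦ P(|f| > z)`:
`Q_f(u) = inf {z ≥ 0 : P(|f| > z) ≤ u}`. -/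
def tailQuantile {Ω : Type*} [MeasurableSpace Ω] (P : Measure Ω) (f : Ω → ℝ) (u : ℝ) : ℝ :=
  sInf {z : ℝ | 0 ≤ z ∧ (P {ω | z < |f ω|}).toReal ≤ u}

/-!
The tail bound `P(|f| > z) ≤ c/z²`, tested at `z = √(c/u)`, gives `Q_f(u)² ≤ c/u`. Hence the
integrand is at most `u^b · c/u = c u^(b-1)`, whose integral over `(0,1)` is `c/b`.
-/

open Set

section TailQuantile

variable {Ω : Type*} [MeasurableSpace Ω] (P : Measure Ω) (f : Ω → ℝ)

lemma tailQuantile_nonneg (u : ℝ) : 0 ≤ tailQuantile P f u :=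
  Real.sInf_nonneg fun _ hz => hz.1

lemma tailQuantile_le {u z : ℝ} (hz : 0 ≤ z) (hPz : (P {ω | z < |f ω|}).toReal ≤ u) :
    tailQuantile P f u ≤ z :=
  csInf_le ⟨0, fun _ hx => hx.1⟩ ⟨hz, hPz⟩

lemma tailQuantile_sq_le_of_tail_bound {c : ℝ} (hc : 0 < c)
    (htail : ∀ z : ℝ, 0 < z → (P {ω | z < |f ω|}).toReal ≤ c / z ^ 2) {u : ℝ} (hu : 0 < u) :
    tailQuantile P f u ^ 2 ≤ c / u := by
  have hcu : 0 < c / u := div_pos hc hu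
  have hz : 0 < √(c / u) := Real.sqrt_pos.2 hcu
  rw [← Real.le_sqrt (tailQuantile_nonneg P f u) hcu.le]
  refine tailQuantile_le P f hz.le ?_
  simpa [Real.sq_sqrt hcu.le, div_div_cancel₀ hc.ne'] using htail _ hz

end TailQuantile

lemma integral_Ioo_zero_one_rpow_sub_one {b : ℝ} (hb : 0 < b) :
    ∫ u in Ioo (0 : ℝ) 1, u ^ (b - 1) = 1 / b := by
  rw [← integral_Ioc_eq_integral_Ioo, ← intervalIntegral.integral_of_le zero_le_one,
    integral_rpow (Or.inl (by linarith)), sub_add_cancel, Real.one_rpow, Real.zero_rpow hb.ne',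
    sub_zero]

theorem dmr_norm_sq_le_of_tail_bound_general
    {Ω : Type*} [MeasurableSpace Ω] (P : Measure Ω)
    (f : Ω → ℝ)
    (c : ℝ) (hc : 0 < c)
    (htail : ∀ z : ℝ, 0 < z → (P {ω | z < |f ω|}).toReal ≤ c / z ^ 2)
    (βinv : ℝ → ℝ) (b : ℝ) (hb : 0 < b)
    (hβnonneg : ∀ u ∈ Set.Ioo (0 : ℝ) 1, 0 ≤ βinv u)
    (hβle : ∀ u ∈ Set.Ioo (0 : ℝ) 1, βinv u ≤ u ^ b) :
    ∫ u in Set.Ioo (0 : ℝ) 1, βinv u * tailQuantile P f u ^ 2 ≤ c / b := by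
  have hbound : ∀ u ∈ Ioo (0 : ℝ) 1, βinv u * tailQuantile P f u ^ 2 ≤ c * u ^ (b - 1) := by
    intro u hu
    calc βinv u * tailQuantile P f u ^ 2 ≤ u ^ b * (c / u) :=
          mul_le_mul (hβle u hu) (tailQuantile_sq_le_of_tail_bound P f hc htail hu.1)
            (sq_nonneg _) (Real.rpow_nonneg hu.1.le b)
      _ = c * u ^ (b - 1) := by rw [Real.rpow_sub_one hu.1.ne']; ring
  have hint : IntegrableOn (fun u : ℝ => c * u ^ (b - 1)) (Ioo 0 1) :=
    ((intervalIntegral.integrableOn_Ioo_rpow_iff one_pos).2 (by linarith)).const_mul c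
  calc ∫ u in Ioo (0 : ℝ) 1, βinv u * tailQuantile P f u ^ 2
      ≤ ∫ u in Ioo (0 : ℝ) 1, c * u ^ (b - 1) :=
        setIntegral_mono_of_nonneg (fun u hu => mul_nonneg (hβnonneg u hu) (sq_nonneg _))
          hbound hint
    _ = c / b := by rw [integral_const_mul, integral_Ioo_zero_one_rpow_sub_one hb]; ring

/-- If `P(|f| > z) ≤ c/z²` for all `z > 0` and `β⁻¹` is a nonincreasing function on `(0,1)`
with `0 ≤ β⁻¹(u) ≤ u^b`, then the Doukhan–Massart–Rio norm satisfies
`‖f‖²_{2,β} = ∫₀¹ β⁻¹(u) Q_f²(u) du ≤ c/b`. -/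
theorem dmr_norm_sq_le_of_tail_bound
    {Ω : Type*} [MeasurableSpace Ω] (P : Measure Ω) [IsProbabilityMeasure P]
    (f : Ω → ℝ) (hf : Measurable f)
    (c : ℝ) (hc : 0 < c)
    (htail : ∀ z : ℝ, 0 < z → (P {ω | z < |f ω|}).toReal ≤ c / z ^ 2)
    (βinv : ℝ → ℝ) (b : ℝ) (hb : 0 < b)
    (hβanti : AntitoneOn βinv (Set.Ioo 0 1))
    (hβnonneg : ∀ u ∈ Set.Ioo (0 : ℝ) 1, 0 ≤ βinv u)
    (hβle : ∀ u ∈ Set.Ioo (0 : ℝ) 1, βinv u ≤ u ^ b) :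
    ∫ u in Set.Ioo (0 : ℝ) 1, βinv u * tailQuantile P f u ^ 2 ≤ c / b :=
  dmr_norm_sq_le_of_tail_bound_general P f c hc htail βinv b hb hβnonneg hβle

end
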